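/- Let q be a positive definite quadratic form on ℝ^{n−1}, so q(y) ≥ |y|²/C for some C ≥ 1. Suppose p(x,ξ) = ½(ξₙ² − xₙ²) + ½q(x',ξ') + r(x) with |r(x)| ≤ K|x|³, and suppose xₙ² ≤ (1/λ²)(ε + |(x',ξ')|² + ξₙ²) with 1/λ² < 1/(4C). Then there exists a neighborhood of 0 and a constant C' ≥ 1 such that on that neighborhood p(ρ) ≥ −ε/C' + |ρ|²/C'. -/
import Mathlib

lemma key_arith (u ε a b c d Q R cub : ℝ) (hu0 : 0 < u) (hu1 : u ≤ 1)
    (ha : 0 ≤ a) (hb : 0 ≤ b) (hc : 0 ≤ c) (hd : 0 ≤ d) (hε : 0 < ε)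
    (hQ : Q ≥ (a + c) * u) (hR : -cub ≤ R)
    (hcub : cub ≤ (a + b + c + d) * u / 10)
    (h3 : b ≤ (ε + a + c + d) * u / 4) :
    (1/2) * (d - b) + (1/2) * Q + R ≥ -(ε * u / 5) + (a + b + c + d) * (u / 5) := by
  nlinarith [mul_nonneg (sub_nonneg.2 hu1) hd,
    mul_nonneg (sub_nonneg.2 hu1) (by positivity : (0:ℝ) ≤ ε + a + c + d),
    mul_nonneg hu0.le (by positivity : (0:ℝ) ≤ ε + a + c + d)]

/-- In the cutoff region `xₙ² ≤ λ⁻²(ε + |(x',ξ')|² + ξₙ²)` with `λ⁻² < 1/(4C)`, the symbol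
`p = ½(ξₙ² − xₙ²) + ½ q(x',ξ') + O(|x|³)` satisfies `p(ρ) ≥ −ε/C' + |ρ|²/C'` near `0`. -/
theorem lower_bound_in_cutoff_region (m : ℕ)
    (C K lam : ℝ) (hC : 1 ≤ C) (hK : 0 ≤ K) (hlam : 1 ≤ lam)
    (hlamC : 1 / lam ^ 2 < 1 / (4 * C))
    (q : EuclideanSpace ℝ (Fin m) → EuclideanSpace ℝ (Fin m) → ℝ)
    (hq : ∀ y z, q y z ≥ (‖y‖ ^ 2 + ‖z‖ ^ 2) / C)
    (r : EuclideanSpace ℝ (Fin m) → ℝ → ℝ)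
    (hr : ∀ x' xn, |r x' xn| ≤ K * (‖x'‖ ^ 2 + xn ^ 2) ^ ((3 : ℝ) / 2)) :
    ∃ δ > 0, ∃ C' ≥ 1, ∀ ε > (0 : ℝ),
      ∀ (x' ξ' : EuclideanSpace ℝ (Fin m)) (xn ξn : ℝ),
        ‖x'‖ ^ 2 + xn ^ 2 + ‖ξ'‖ ^ 2 + ξn ^ 2 < δ →
        xn ^ 2 ≤ (1 / lam ^ 2) * (ε + ‖x'‖ ^ 2 + ‖ξ'‖ ^ 2 + ξn ^ 2) →
        (1 / 2) * (ξn ^ 2 - xn ^ 2) + (1 / 2) * q x' ξ' + r x' xn ≥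
          -ε / C' + (‖x'‖ ^ 2 + xn ^ 2 + ‖ξ'‖ ^ 2 + ξn ^ 2) / C' := by
  have hC0 : (0:ℝ) < C := lt_of_lt_of_le one_pos hC
  have hK1 : (0:ℝ) < K + 1 := by linarith
  refine ⟨min 1 ((1/(10*C*(K+1)))^2), by positivity, 5*C, by linarith, ?_⟩
  intro ε hε x' ξ' xn ξn hδ hcut
  set a := ‖x'‖ ^ 2 with ha_def
  set b := xn ^ 2 with hb_def
  set c := ‖ξ'‖ ^ 2 with hc_def
  set d := ξn ^ 2 with hd_def
  have ha : 0 ≤ a := by positivity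
  have hb : 0 ≤ b := by positivity
  have hc : 0 ≤ c := by positivity
  have hd : 0 ≤ d := by positivity
  have hSnn : (0:ℝ) ≤ a + b + c + d := by linarith
  -- cutoff bound
  have h3 : b ≤ (ε + a + c + d) * (1/C) / 4 := by
    have hT : (0:ℝ) ≤ ε + a + c + d := by linarith
    have h1 : (1 / lam ^ 2) * (ε + a + c + d) ≤ (1 / (4*C)) * (ε + a + c + d) :=
      mul_le_mul_of_nonneg_right hlamC.le hT
    have h2 : (1 / (4*C)) * (ε + a + c + d) = (ε + a + c + d) * (1/C) / 4 := by ring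
    calc b ≤ (1 / lam ^ 2) * (ε + a + c + d) := hcut
      _ ≤ (1 / (4*C)) * (ε + a + c + d) := h1
      _ = (ε + a + c + d) * (1/C) / 4 := h2
  -- cubic bound
  have hcub : K * (a + b) ^ ((3:ℝ)/2) ≤ (a + b + c + d) * (1/C) / 10 := by
    have e1 : (a + b) ^ ((3:ℝ)/2) ≤ (a + b + c + d) ^ ((3:ℝ)/2) :=
      Real.rpow_le_rpow (by linarith) (by linarith) (by norm_num)
    have e2 : (a + b + c + d) ^ ((3:ℝ)/2)
        = (a + b + c + d) * Real.sqrt (a + b + c + d) := by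
      rw [show (3:ℝ)/2 = 1 + 1/2 by norm_num,
        Real.rpow_add' hSnn (by norm_num), Real.rpow_one,
        ← Real.sqrt_eq_rpow]
    have e3 : Real.sqrt (a + b + c + d) ≤ 1/(10*C*(K+1)) := by
      have : a + b + c + d ≤ (1/(10*C*(K+1)))^2 :=
        le_trans hδ.le (min_le_right _ _)
      calc Real.sqrt (a+b+c+d) ≤ Real.sqrt ((1/(10*C*(K+1)))^2) :=
            Real.sqrt_le_sqrt this
        _ = 1/(10*C*(K+1)) := Real.sqrt_sq (by positivity)
    have e4 : (a + b) ^ ((3:ℝ)/2) ≤ (a + b + c + d) * (1/(10*C*(K+1))) := by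
      calc (a + b) ^ ((3:ℝ)/2) ≤ (a + b + c + d) ^ ((3:ℝ)/2) := e1
        _ = (a + b + c + d) * Real.sqrt (a + b + c + d) := e2
        _ ≤ (a + b + c + d) * (1/(10*C*(K+1))) :=
            mul_le_mul_of_nonneg_left e3 hSnn
    have e5 : K * (a + b) ^ ((3:ℝ)/2) ≤ K * ((a + b + c + d) * (1/(10*C*(K+1)))) :=
      mul_le_mul_of_nonneg_left e4 hK
    have e6 : (a + b + c + d) * (1/C) / 10
        - K * ((a + b + c + d) * (1/(10*C*(K+1))))
        = (a + b + c + d) * (1/(10*C*(K+1))) := by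
      field_simp
      ring
    have e7 : (0:ℝ) ≤ (a + b + c + d) * (1/(10*C*(K+1))) := by positivity
    linarith
  -- quadratic form bound
  have hQ : q x' ξ' ≥ (a + c) * (1/C) := by
    have h := hq x' ξ'
    have : (a + c) / C = (a + c) * (1/C) := by ring
    linarith [this ▸ h]
  -- remainder lower bound
  have hR : -(K * (a + b) ^ ((3:ℝ)/2)) ≤ r x' xn := by
    have h1 := hr x' xn
    have h2 := neg_abs_le (r x' xn)
    linarith
  have hu0 : (0:ℝ) < 1/C := by positivity
  have hu1 : (1:ℝ)/C ≤ 1 := by rw [div_le_one hC0]; exact hC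
  have key := key_arith (1/C) ε a b c d (q x' ξ') (r x' xn)
    (K * (a + b) ^ ((3:ℝ)/2)) hu0 hu1 ha hb hc hd hε hQ hR hcub h3
  have eq1 : -ε / (5*C) + (a + b + c + d) / (5*C)
      = -(ε * (1/C) / 5) + (a + b + c + d) * ((1/C) / 5) := by ring
  rw [eq1]
  exact key
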